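/- A continuous map of a planar disk that is boundary-close to a nontrivial rotation has a fixed point: let r > 0, let α ∈ (0, π), let R_α : ℝ² → ℝ² be the rotation about the origin by angle α, and let F : ℝ² → ℝ² be continuous on the closed disk {‖p‖ ≤ r}. If ‖F(p) − R_α(p)‖ < r·sin α for every p with ‖p‖ = r, then there exists x with ‖x‖ < r and F(x) = x. -/

import Mathlib

/-!
Identify the plane with `ℂ` and put `c = e^{ia} - 1`. If `F` had no fixed point in the open disk,
`g z = F z - z` would vanish nowhere on the closed disk, since on the boundary circle `g z` is
within `r sin a ≤ ‖c z‖` of `c z`. The disk is simply connected, so `g` has a continuous logarithm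
there; as `g z / (c z)` stays in the disk `‖w - 1‖ < 1` on the circle, subtracting its principal
logarithm gives a continuous logarithm of `z` on the circle, which does not exist.
-/

open Real

noncomputable section

/-- Rotation of the Euclidean plane about the origin by angle `a`. -/
def rot2 (a : ℝ) (p : EuclideanSpace ℝ (Fin 2)) : EuclideanSpace ℝ (Fin 2) :=
  (WithLp.equiv 2 (Fin 2 → ℝ)).symm
    ![Real.cos a * p 0 - Real.sin a * p 1, Real.sin a * p 0 + Real.cos a * p 1]

open Complex Metric Set

theorem exists_continuous_exp_eq {A : Type*} [TopologicalSpace A] [SimplyConnectedSpace A]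
    [LocallyPathConnectedSpace A] (f : C(A, ℂ)) (hf : ∀ a, f a ≠ 0) :
    ∃ L : C(A, ℂ), ∀ a, exp (L a) = f a := by
  obtain ⟨a₀⟩ : Nonempty A := inferInstance
  obtain ⟨L, ⟨-, hL⟩, -⟩ := isCoveringMapOn_exp.existsUnique_continuousMap_lifts f
    (exp_log (hf a₀)) hf
  exact ⟨L, fun a ↦ congrFun hL a⟩

theorem Convex.exists_continuousOn_exp_eq {E : Type*} [NormedAddCommGroup E] [NormedSpace ℝ E]
    {s : Set E} (hs : Convex ℝ s) {g : E → ℂ} (hg : ContinuousOn g s)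
    (hg₀ : ∀ z ∈ s, g z ≠ 0) :
    ∃ L : E → ℂ, ContinuousOn L s ∧ ∀ z ∈ s, exp (L z) = g z := by
  rcases s.eq_empty_or_nonempty with rfl | hne
  · exact ⟨0, continuousOn_empty _, fun _ ↦ False.elim⟩
  have := hs.contractibleSpace hne
  have := hs.locallyPathConnectedSpace
  obtain ⟨L, hL⟩ := exists_continuous_exp_eq ⟨s.domRestrict g, hg.domRestrict⟩
    fun z ↦ hg₀ z z.2
  classical
  refine ⟨fun z ↦ if h : z ∈ s then L ⟨z, h⟩ else 0, ?_, fun z hz ↦ by simpa [hz] using hL ⟨z, hz⟩⟩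
  rw [continuousOn_iff_continuous_domRestrict]
  convert L.continuous using 1
  funext z
  simp [z.2]

theorem not_exists_continuousOn_exp_eq_self_sphere {r : ℝ} (hr : 0 ≤ r) :
    ¬ ∃ M : ℂ → ℂ, ContinuousOn M (sphere 0 r) ∧ ∀ z ∈ sphere 0 r, exp (M z) = z := by
  rintro ⟨M, hM, hexp⟩
  set γ : ℝ → ℂ := fun θ ↦ r * exp (θ * I)
  have hγ : ∀ θ, γ θ ∈ sphere 0 r := fun θ ↦ by
    simp [γ, norm_exp_ofReal_mul_I, abs_of_nonneg hr]
  -- `θ ↦ M (γ θ) - θ I` lifts the constant loop `r` through `exp`, so it is constant.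
  have hconst := isCoveringMap_exp.const_of_comp (g := fun θ : ℝ ↦ M (γ θ) - θ * I)
    ((hM.comp_continuous (by fun_prop) hγ).sub (by fun_prop))
    (fun θ θ' ↦ Subtype.ext <| by simp only [Complex.exp_sub, hexp _ (hγ _)]; simp [γ]) (2 * π) 0
  have hγ2π : γ (2 * π) = γ 0 := by simp [γ, exp_two_pi_mul_I]
  simp [hγ2π, pi_ne_zero] at hconst

theorem sin_le_norm_exp_mul_I_sub_one (a : ℝ) : Real.sin a ≤ ‖exp (a * I) - 1‖ :=
  calc Real.sin a = (exp (a * I) - 1).im := by simp [exp_ofReal_mul_I_im]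
    _ ≤ |(exp (a * I) - 1).im| := le_abs_self _
    _ ≤ ‖exp (a * I) - 1‖ := abs_im_le_norm _

theorem exists_mem_ball_eq_zero_of_norm_sub_mul_lt {r : ℝ} (hr : 0 ≤ r) {g : ℂ → ℂ} {c : ℂ}
    (hg : ContinuousOn g (closedBall 0 r))
    (hclose : ∀ z ∈ sphere 0 r, ‖g z - c * z‖ < ‖c * z‖) :
    ∃ z ∈ ball 0 r, g z = 0 := by
  by_contra! hg₀
  have hcz : ∀ z ∈ sphere 0 r, c * z ≠ 0 := fun z hz h ↦
    (norm_nonneg _).not_gt (by simpa [h] using hclose z hz)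
  have hne : ∀ z ∈ closedBall 0 r, g z ≠ 0 := by
    intro z hz h
    rcases (mem_closedBall_zero_iff.1 hz).lt_or_eq with hlt | heq
    · exact hg₀ z (mem_ball_zero_iff.2 hlt) h
    · simpa [h] using hclose z (mem_sphere_zero_iff_norm.2 heq)
  obtain ⟨L, hL, hexp⟩ := (convex_closedBall 0 r).exists_continuousOn_exp_eq hg hne
  set w : ℂ → ℂ := fun z ↦ g z / (c * z)
  have hw : ∀ z ∈ sphere 0 r, w z ∈ slitPlane := fun z hz ↦ by
    have : ‖w z - 1‖ < 1 := by
      rw [div_sub_one (hcz z hz), norm_div, div_lt_one (norm_pos_iff.2 (hcz z hz))]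
      exact hclose z hz
    simpa using mem_slitPlane_of_norm_lt_one this
  refine not_exists_continuousOn_exp_eq_self_sphere hr ⟨fun z ↦ L z - log c - log (w z), ?_, ?_⟩
  · exact ((hL.mono sphere_subset_closedBall).sub continuousOn_const).sub
      (((hg.mono sphere_subset_closedBall).div (by fun_prop) hcz).clog hw)
  · intro z hz
    have hc : c ≠ 0 := left_ne_zero_of_mul (hcz z hz)
    rw [Complex.exp_sub, Complex.exp_sub, hexp z (sphere_subset_closedBall hz), exp_log hc,
      exp_log (slitPlane_ne_zero (hw z hz))]
    have := hne z (sphere_subset_closedBall hz)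
    simp only [w]
    field_simp

theorem orthonormalBasisOneI_repr_symm_rot2 (a : ℝ) (p : EuclideanSpace ℝ (Fin 2)) :
    orthonormalBasisOneI.repr.symm (rot2 a p) = exp (a * I) * orthonormalBasisOneI.repr.symm p := by
  apply Complex.ext <;>
    simp [rot2, exp_ofReal_mul_I_re, exp_ofReal_mul_I_im, -ofReal_cos, -ofReal_sin, add_comm]

theorem fixed_point_of_near_rotation_general (r : ℝ) (hr : 0 < r) (a : ℝ)
    (F : EuclideanSpace ℝ (Fin 2) → EuclideanSpace ℝ (Fin 2))
    (hF : ContinuousOn F {p : EuclideanSpace ℝ (Fin 2) | ‖p‖ ≤ r})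
    (hclose : ∀ p : EuclideanSpace ℝ (Fin 2), ‖p‖ = r → ‖F p - rot2 a p‖ < r * Real.sin a) :
    ∃ x : EuclideanSpace ℝ (Fin 2), ‖x‖ < r ∧ F x = x := by
  set e := orthonormalBasisOneI.repr
  have hcont : ContinuousOn (fun z ↦ e.symm (F (e z)) - z) (closedBall 0 r) :=
    (e.symm.continuous.comp_continuousOn
      (hF.comp e.continuous.continuousOn fun z hz ↦ by simpa using hz)).sub continuousOn_id
  have hbound : ∀ z ∈ sphere (0 : ℂ) r,
      ‖e.symm (F (e z)) - z - (exp (a * I) - 1) * z‖ < ‖(exp (a * I) - 1) * z‖ := by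
    intro z hz
    rw [mem_sphere_zero_iff_norm] at hz
    calc ‖e.symm (F (e z)) - z - (exp (a * I) - 1) * z‖ = ‖F (e z) - rot2 a (e z)‖ := by
          rw [← e.symm.norm_map, map_sub, orthonormalBasisOneI_repr_symm_rot2, e.symm_apply_apply]
          ring_nf
      _ < r * Real.sin a := hclose _ (by simpa using hz)
      _ ≤ ‖(exp (a * I) - 1) * z‖ := by
          rw [norm_mul, hz, mul_comm ‖_‖]
          exact mul_le_mul_of_nonneg_left (sin_le_norm_exp_mul_I_sub_one a) hr.le
  obtain ⟨z, hz, hFz⟩ := exists_mem_ball_eq_zero_of_norm_sub_mul_lt hr.le hcont hbound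
  exact ⟨e z, by simpa using hz, e.symm_apply_eq.1 (sub_eq_zero.1 hFz)⟩

/-- a continuous map of a closed planar disk that is boundary-close to a
nontrivial rotation has a fixed point in the open disk. -/
theorem fixed_point_of_near_rotation (r : ℝ) (hr : 0 < r) (a : ℝ) (ha : a ∈ Set.Ioo 0 π)
    (F : EuclideanSpace ℝ (Fin 2) → EuclideanSpace ℝ (Fin 2))
    (hF : ContinuousOn F {p : EuclideanSpace ℝ (Fin 2) | ‖p‖ ≤ r})
    (hclose : ∀ p : EuclideanSpace ℝ (Fin 2), ‖p‖ = r → ‖F p - rot2 a p‖ < r * Real.sin a) :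
    ∃ x : EuclideanSpace ℝ (Fin 2), ‖x‖ < r ∧ F x = x :=
  fixed_point_of_near_rotation_general r hr a F hF hclose
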